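/- arXiv:math/0311312 — 3 statements merged into one kernel-verified Lean document; each statement's English description precedes it below -/
import Mathlib

section
/- Let i ≥ 1 and e ≥ 1 be integers and set d := i·e. Let F ∈ R[x] be the remainder of q(i·x) under division by the monic polynomial Q_e(x), so deg F ≤ e. Then the coefficient of x^e in F equals i^e·∏_{0 ≤ j ≤ d, i ∤ j} (j·u + (d−j)·v). -/
noncomputable section

abbrev R2 : Type := MvPolynomial (Fin 2) ℚ

def uu : R2 := MvPolynomial.X 0
def vv : R2 := MvPolynomial.X 1

/-- The involution of `R2 = ℚ[u,v]` swapping `u` and `v`; `P*`. -/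
def swapUV (P : R2) : R2 := MvPolynomial.rename (Equiv.swap (0 : Fin 2) 1) P

/-- `Q_k(y) = ∏_{j=0}^{k} (y + j·u + (k−j)·v)` in `R2[y]`. -/
def Qp (k : ℕ) : Polynomial R2 :=
  ∏ j ∈ Finset.range (k + 1),
    (Polynomial.X + Polynomial.C ((j : R2) * uu + ((k - j : ℕ) : R2) * vv))

/-- `C_{d+1} = ∏_{j=0}^{d} (j·u + (d−j)·v)` in `R2`. -/
def Cdtop (d : ℕ) : R2 :=
  ∏ j ∈ Finset.range (d + 1), ((j : R2) * uu + ((d - j : ℕ) : R2) * vv)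

/-- `Q_k(x_i)` as an element of `R2[x_1,…,x_r]`. -/
def Qm (r k : ℕ) (i : Fin r) : MvPolynomial (Fin r) R2 :=
  ∏ j ∈ Finset.range (k + 1),
    (MvPolynomial.X i + MvPolynomial.C ((j : R2) * uu + ((k - j : ℕ) : R2) * vv))


/-!
Substituting `y = i·x` into `Q_d`, the factors with `i ∣ j` give `i^{e+1}·Q_e(x)`, so
`i·x·q(i·x) = Q_d(i·x) − C_{d+1}` shows that `Q_e` divides `i·x·F + C_{d+1}`. This polynomial
has degree at most `e + 1 = deg Q_e`, hence it is a constant multiple of `Q_e`; comparing the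
coefficients of `x^{e+1}` and `x^0` gives `C_{d+1} = i·F_e·C_{e+1}`, and factoring `C_{d+1}` in
the same way as `Q_d(i·x)` yields the formula after cancelling `i·C_{e+1} ≠ 0`.
-/

open Polynomial Finset

namespace Polynomial

variable {R : Type*} [CommRing R]

theorem eq_coeff_mul_coeff_zero_of_monic_dvd {Q F : R[X]} {a c : R} {n : ℕ} (hQ : Q.Monic)
    (hQdeg : Q.natDegree = n + 1) (hF : F.natDegree ≤ n) (hdvd : Q ∣ C a * X * F + C c) :
    c = a * F.coeff n * Q.coeff 0 := by
  set P := C a * X * F + C c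
  have hPdeg : P.natDegree ≤ Q.natDegree := by
    rw [hQdeg]
    refine (natDegree_add_le _ _).trans (max_le (natDegree_mul_le.trans ?_) (by simp))
    have : (C a * X).natDegree ≤ 1 := (natDegree_C_mul_le a X).trans natDegree_X_le
    omega
  have hP := eq_mul_leadingCoeff_of_monic_of_dvd_of_natDegree_le hQ hdvd hPdeg
  have hlc : P.leadingCoeff = a * F.coeff n := by
    have htop := congrArg (coeff · (n + 1)) hP
    rw [coeff_mul_C, ← hQdeg, hQ.coeff_natDegree, one_mul, hQdeg] at htop
    rw [← htop]
    simp [P, mul_assoc]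
  have hbot := congrArg (coeff · 0) hP
  simp only [coeff_mul_C, hlc] at hbot
  rw [mul_comm, ← hbot]
  simp [P]

end Polynomial

theorem monic_Qp (k : ℕ) : (Qp k).Monic :=
  monic_prod_of_monic _ _ fun _ _ => monic_X_add_C _

theorem natDegree_Qp (k : ℕ) : (Qp k).natDegree = k + 1 := by
  rw [Qp, natDegree_prod _ _ fun _ _ => (monic_X_add_C _).ne_zero]
  simp only [natDegree_X_add_C, sum_const, card_range, smul_eq_mul, mul_one]

theorem coeff_zero_Qp (k : ℕ) : (Qp k).coeff 0 = Cdtop k := by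
  simp [coeff_zero_eq_eval_zero, Qp, Cdtop, eval_prod]

theorem natDegree_modByMonic_Qp_le (p : R2[X]) (k : ℕ) : (p %ₘ Qp k).natDegree ≤ k := by
  have hQ1 : Qp k ≠ 1 := fun h => by simpa [h] using natDegree_Qp k
  have := natDegree_modByMonic_lt p (monic_Qp k) hQ1
  rwa [natDegree_Qp, Nat.lt_succ_iff] at this

theorem Cdtop_ne_zero {k : ℕ} (hk : 1 ≤ k) : Cdtop k ≠ 0 := by
  refine prod_ne_zero_iff.mpr fun j hj h => ?_
  have hj : j ≤ k := Nat.lt_succ_iff.mp (mem_range.mp hj)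
  -- at `u = v = 1` the linear form `j·u + (k−j)·v` becomes `k`
  have h1 := congrArg (MvPolynomial.eval fun _ => (1 : ℚ)) h
  simp only [uu, vv, map_add, map_mul, map_natCast, MvPolynomial.eval_X, mul_one,
    map_zero] at h1
  rw [← Nat.cast_add, Nat.add_sub_cancel' hj, Nat.cast_eq_zero] at h1
  omega

theorem filter_dvd_range_mul_succ {i : ℕ} (hi : 1 ≤ i) (e : ℕ) :
    (range (i * e + 1)).filter (i ∣ ·) = (range (e + 1)).image (i * ·) := by
  ext j
  simp only [mem_filter, mem_range, mem_image, Nat.lt_succ_iff]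
  constructor
  · rintro ⟨hj, m, rfl⟩
    exact ⟨m, Nat.le_of_mul_le_mul_left hj hi, rfl⟩
  · rintro ⟨m, hm, rfl⟩
    exact ⟨Nat.mul_le_mul_left i hm, dvd_mul_right i m⟩

theorem Qp_comp_C_mul_X {i : ℕ} (hi : 1 ≤ i) (e : ℕ) :
    (Qp (i * e)).comp (C (i : R2) * X) =
      C ((i : R2) ^ (e + 1)) * Qp e *
        ∏ j ∈ (range (i * e + 1)).filter (fun j => ¬ i ∣ j),
          (C (i : R2) * X + C ((j : R2) * uu + ((i * e - j : ℕ) : R2) * vv)) := by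
  rw [Qp, Polynomial.prod_comp]
  simp only [add_comp, X_comp, C_comp]
  rw [← prod_filter_mul_prod_filter_not (range (i * e + 1)) (i ∣ ·)]
  congr 1
  rw [filter_dvd_range_mul_succ hi, prod_image fun m _ n _ h => Nat.eq_of_mul_eq_mul_left hi h]
  have hfactor : ∀ m ∈ range (e + 1),
      C (i : R2) * X + C (((i * m : ℕ) : R2) * uu + ((i * e - i * m : ℕ) : R2) * vv) =
        C (i : R2) * (X + C ((m : R2) * uu + ((e - m : ℕ) : R2) * vv)) := by
    intro m _
    rw [← Nat.mul_sub]
    simp only [Nat.cast_mul, map_add, map_mul]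
    ring
  rw [prod_congr rfl hfactor, prod_mul_distrib, prod_const, card_range, ← Qp, C_pow]

theorem Cdtop_mul_eq {i : ℕ} (hi : 1 ≤ i) (e : ℕ) :
    Cdtop (i * e) = (i : R2) ^ (e + 1) * Cdtop e *
      ∏ j ∈ (range (i * e + 1)).filter (fun j => ¬ i ∣ j),
        ((j : R2) * uu + ((i * e - j : ℕ) : R2) * vv) := by
  simpa [← coeff_zero_Qp, coeff_zero_eq_eval_zero, eval_comp, eval_prod] using
    congrArg (eval 0) (Qp_comp_C_mul_X hi e)

theorem Qp_dvd_C_mul_X_mul_modByMonic_add {i : ℕ} (hi : 1 ≤ i) (e : ℕ) {q : R2[X]}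
    (hq : X * q = Qp (i * e) - C (Cdtop (i * e))) :
    Qp e ∣ C (i : R2) * X * (q.comp (C (i : R2) * X) %ₘ Qp e) + C (Cdtop (i * e)) := by
  set qi := q.comp (C (i : R2) * X)
  have hqi : C (i : R2) * X * qi = (Qp (i * e)).comp (C (i : R2) * X) - C (Cdtop (i * e)) := by
    have h := congrArg (·.comp (C (i : R2) * X)) hq
    rwa [Polynomial.mul_comp, X_comp, sub_comp, C_comp] at h
  have hsplit : C (i : R2) * X * (qi %ₘ Qp e) + C (Cdtop (i * e)) =
      C (i : R2) * X * (qi %ₘ Qp e - qi) + (Qp (i * e)).comp (C (i : R2) * X) := by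
    rw [mul_sub, hqi]
    ring
  rw [hsplit, Qp_comp_C_mul_X hi e]
  exact dvd_add (dvd_mul_of_dvd_right (dvd_modByMonic_sub qi _) _)
    (dvd_mul_of_dvd_left (dvd_mul_left _ _) _)

/-- Example 3.5: the Thom polynomial of the partition `λ = (i^e)` of `d = i·e`. -/
theorem stmt4 (i e : ℕ) (hi : 1 ≤ i) (he : 1 ≤ e) (d : ℕ) (hd : d = i * e)
    (q : Polynomial R2) (hq : Polynomial.X * q = Qp d - Polynomial.C (Cdtop d))
    (F : Polynomial R2)
    (hF : F = (q.comp (Polynomial.C (i : R2) * Polynomial.X)) %ₘ Qp e) :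
    F.coeff e = (i : R2) ^ e *
      ∏ j ∈ (Finset.range (d + 1)).filter (fun j => ¬ i ∣ j),
        ((j : R2) * uu + ((d - j : ℕ) : R2) * vv) := by
  subst hd hF
  have hCdtop := eq_coeff_mul_coeff_zero_of_monic_dvd (monic_Qp e) (natDegree_Qp e)
    (natDegree_modByMonic_Qp_le _ e) (Qp_dvd_C_mul_X_mul_modByMonic_add hi e hq)
  rw [coeff_zero_Qp, Cdtop_mul_eq hi e] at hCdtop
  have hi0 : (i : R2) ≠ 0 := Nat.cast_ne_zero.mpr (by omega)
  apply mul_left_cancel₀ hi0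
  apply mul_right_cancel₀ (Cdtop_ne_zero he)
  rw [← hCdtop]
  ring
end
end

section
/- Let d = 2h with h > 2 and set Π := ∏_{l=0}^{h−1} (l·v + (d−l)·u). Suppose F ∈ R[x,y,z] satisfies deg_x F ≤ h−2, deg_y F ≤ 1, deg_z F ≤ 1, and q(x + 2·y + h·z) − F lies in the ideal generated by Q_{h−2}(x), Q_1(y) and Q_1(z). Then the coefficient of the monomial x^{h−2}·y·z in F equals h·(h−1)·∂((u+3v)·Π). -/
noncomputable section

/-! Evaluate `F` on the grid `x = -L^{h-2}_a`, `y = -L^1_b`, `z = -L^1_c` (`0 ≤ a ≤ h - 2`,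
`0 ≤ b, c ≤ 1`), where `L^k_m = m·u + (k-m)·v`.  There `Q_{h-2}(x)`, `Q_1(y)`, `Q_1(z)` vanish and
`x + 2y + hz = -L^d_{a+2b+hc}` is a root of `Q_d`, so `F` takes the value
`q(-L^d_m) = C_{d+1}/L^d_m`.
The alternating binomial sum over the grid is an iterated finite difference with step `u - v`: on
`F` it kills every monomial except `x^{h-2}yz`, whose coefficient it multiplies by
`(h-2)!·(u-v)^h`; on the values `C_{d+1}/L^d_m` it gives `(h-2)!·(u-v)^{h-2}` times a signed sum,
over the four windows `[m, m + h - 2]`, `m ∈ {0, 2, h, h + 2}`, of the product of the `L^d_i`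
outside the window, and that sum is `h(h-1)(u-v)·((u+3v)Π - ((u+3v)Π)*)`. -/

open Finset Nat

theorem sum_alternating_choose_mul_sub_pow {R : Type*} [CommRing R] {n e : ℕ} (he : e ≤ n)
    (c w : R) :
    ∑ j ∈ range (n + 1), (-1 : R) ^ j * n.choose j * (c - j * w) ^ e
      = if e = n then (n ! : R) * w ^ n else 0 := by
  have hexp : (fun r : R => (c - r * w) ^ e)
      = ∑ i ∈ range (e + 1), (e.choose i * c ^ (e - i) * (-w) ^ i) • fun r : R => r ^ i := by
    ext r
    simp only [Finset.sum_apply, Pi.smul_apply, smul_eq_mul, sub_eq_add_neg, add_comm c, add_pow]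
    refine sum_congr rfl fun i _ => ?_
    rw [neg_mul_eq_mul_neg, mul_pow]
    ring
  have hΔ : (fwdDiff (1 : R))^[n] (fun r : R => (c - r * w) ^ e) 0
      = if e = n then (n ! : R) * (-w) ^ n else 0 := by
    rw [hexp, fwdDiff_iter_finsetSum, Finset.sum_apply, sum_range_succ,
      sum_eq_zero fun i hi => by
        rw [fwdDiff_iter_const_smul, fwdDiff_iter_pow_eq_zero_of_lt (by simp at hi; omega),
          smul_zero, Pi.zero_apply]]
    rcases he.lt_or_eq with hlt | rfl
    · simp [fwdDiff_iter_pow_eq_zero_of_lt hlt, hlt.ne]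
    · simp [fwdDiff_iter_eq_factorial, mul_comm]
  have hshift := fwdDiff_iter_eq_sum_shift (1 : R) (fun r : R => (c - r * w) ^ e) n 0
  simp only [zero_add, nsmul_eq_mul, mul_one, zsmul_eq_mul] at hshift
  calc ∑ j ∈ range (n + 1), (-1 : R) ^ j * n.choose j * (c - j * w) ^ e
      = (-1) ^ n * (fwdDiff (1 : R))^[n] (fun r : R => (c - r * w) ^ e) 0 := by
        rw [hshift, mul_sum]
        refine sum_congr rfl fun j hj => ?_
        rw [← pow_sub_mul_pow (-1 : R) (mem_range_succ_iff.mp hj)]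
        push_cast
        ring_nf
        simp [pow_mul']
    _ = if e = n then (n ! : R) * w ^ n else 0 := by
        rw [hΔ]
        split_ifs
        · have hsq : (-1 : R) ^ n * (-1) ^ n = 1 := by rw [← mul_pow]; simp
          rw [neg_pow w]
          linear_combination ((n ! : R) * w ^ n) * hsq
        · rw [mul_zero]

theorem prod_range_erase_of_le {M : Type*} [CommMonoid M] (f : ℕ → M) {n m : ℕ} (hm : m ≤ n) :
    ∏ i ∈ (range (n + 2)).erase m, f i = f (n + 1) * ∏ i ∈ (range (n + 1)).erase m, f i := by
  rw [range_add_one (n := n + 1), erase_insert_of_ne (by omega), prod_insert (by simp)]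

theorem prod_range_erase_succ {M : Type*} [CommMonoid M] (f : ℕ → M) (n m : ℕ) :
    ∏ i ∈ (range (n + 2)).erase (m + 1), f i
      = f 0 * ∏ i ∈ (range (n + 1)).erase m, f (i + 1) := by
  rw [show (range (n + 2)).erase (m + 1) = insert 0 (((range (n + 1)).erase m).image (· + 1)) by
      ext (_ | i) <;> simp, prod_insert (by simp), prod_image (by simp)]

/-- The identity `∑ₘ (-1)^m C(n,m) / (A + m w) = n! wⁿ / ∏ᵢ (A + i w)` with denominators cleared. -/
theorem sum_alternating_choose_mul_prod_erase {R : Type*} [CommRing R] (n : ℕ) (A w : R) :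
    ∑ m ∈ range (n + 1), (-1 : R) ^ m * n.choose m * ∏ i ∈ (range (n + 1)).erase m, (A + i * w)
      = n ! * w ^ n := by
  induction n generalizing A with
  | zero => simp
  | succ n ih =>
    have htop : ∑ m ∈ range (n + 1),
        (n.choose m : R) * ((-1) ^ m * ∏ i ∈ (range (n + 2)).erase m, (A + i * w))
          = (A + (n + 1) * w) * (n ! * w ^ n) := by
      rw [← ih, mul_sum]
      refine sum_congr rfl fun m hm => ?_
      rw [prod_range_erase_of_le _ (mem_range_succ_iff.mp hm)]
      push_cast
      ring
    have hbot : ∑ m ∈ range (n + 1),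
        (n.choose m : R) * ((-1) ^ (m + 1) * ∏ i ∈ (range (n + 2)).erase (m + 1), (A + i * w))
          = -A * (n ! * w ^ n) := by
      rw [← ih (A + w), mul_sum]
      refine sum_congr rfl fun m _ => ?_
      rw [prod_range_erase_succ, prod_congr rfl fun i _ =>
        show A + ((i + 1 : ℕ) : R) * w = A + w + i * w by push_cast; ring]
      push_cast
      ring
    calc _ = ∑ m ∈ range (n + 2),
          ((n + 1).choose m : R) * ((-1) ^ m * ∏ i ∈ (range (n + 2)).erase m, (A + i * w)) :=
          sum_congr rfl fun m _ => by ring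
      _ = _ := by
        rw [sum_choose_succ_mul (fun m _ => (-1 : R) ^ m * ∏ i ∈ (range (n + 2)).erase m,
          (A + i * w)) n, htop, hbot, factorial_succ]
        push_cast
        ring

theorem Fintype.sum_piFinset_fin_three {α M : Type*} [DecidableEq α] [AddCommMonoid M]
    (t : Fin 3 → Finset α) (f : (Fin 3 → α) → M) :
    ∑ j ∈ Fintype.piFinset t, f j = ∑ a ∈ t 0, ∑ b ∈ t 1, ∑ c ∈ t 2, f ![a, b, c] := by
  simp_rw [← sum_product']
  refine sum_nbij' (fun j => (j 0, j 1, j 2)) (fun p => ![p.1, p.2.1, p.2.2]) ?_ ?_ ?_ ?_ ?_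
  · simp +contextual
  · simp [Fin.forall_fin_succ]
  · intro j _
    ext i
    fin_cases i <;> rfl
  · simp
  · intro j _
    congr
    ext i
    fin_cases i <;> rfl

theorem MvPolynomial.sum_piFinset_alternating_choose_mul_eval {σ R : Type*} [Fintype σ]
    [DecidableEq σ] [CommRing R] (n : σ → ℕ) (c : σ → R) (w : R) (F : MvPolynomial σ R)
    (hF : ∀ i, F.degreeOf i ≤ n i) :
    ∑ j ∈ Fintype.piFinset (fun i => range (n i + 1)),
        (∏ i, (-1 : R) ^ j i * (n i).choose (j i)) * eval (fun i => c i - j i * w) F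
      = (∏ i, ((n i)! : R) * w ^ n i) * coeff (Finsupp.equivFunOnFinite.symm n) F := by
  have hmono : ∀ m ∈ F.support,
      ∑ j ∈ Fintype.piFinset (fun i => range (n i + 1)),
          (∏ i, (-1 : R) ^ j i * (n i).choose (j i)) * (coeff m F * ∏ i, (c i - j i * w) ^ m i)
        = coeff m F * if m = Finsupp.equivFunOnFinite.symm n then ∏ i, ((n i)! : R) * w ^ n i
            else 0 := by
    intro m hm
    have hprod := prod_univ_sum (fun i => range (n i + 1))
      (fun i k => (-1 : R) ^ k * (n i).choose k * (c i - k * w) ^ m i)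
    simp only [fun i => sum_alternating_choose_mul_sub_pow
      ((degreeOf_le_iff.mp (hF i)) m hm) (c i) w, prod_ite_zero] at hprod
    have hiff : (∀ i ∈ univ, m i = n i) ↔ m = Finsupp.equivFunOnFinite.symm n := by
      simp [Finsupp.ext_iff]
    simp only [hiff] at hprod
    rw [hprod, mul_sum]
    refine sum_congr rfl fun j _ => ?_
    simp only [prod_mul_distrib]
    ring
  simp_rw [eval_eq', mul_sum]
  rw [sum_comm, sum_congr rfl hmono, sum_eq_single (Finsupp.equivFunOnFinite.symm n)
    (fun m _ hm => by rw [if_neg hm, mul_zero])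
    (fun hn => by rw [notMem_support_iff.mp hn, zero_mul]), if_pos rfl, mul_comm]

theorem RingHom.map_eq_of_sub_mem_span {A B : Type*} [CommRing A] [Ring B] (f : A →+* B)
    {S : Set A} (hS : ∀ g ∈ S, f g = 0) {a b : A} (h : a - b ∈ Ideal.span S) : f a = f b := by
  have := Ideal.span_le.mpr (fun g hg => RingHom.mem_ker.mpr (hS g hg)) h
  rwa [RingHom.mem_ker, map_sub, sub_eq_zero] at this

theorem uu_sub_vv_ne_zero : uu - vv ≠ 0 := by
  intro h
  simpa [uu, vv] using congrArg (MvPolynomial.eval ![1, 0]) h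

/-- The factor `m·u + (k-m)·v` of `Q_k` (for `m ≤ k`), written without truncated subtraction. -/
def linForm (k m : ℕ) : R2 := k * vv + m * (uu - vv)

theorem linForm_eq {k m : ℕ} (hm : m ≤ k) :
    (m : R2) * uu + ((k - m : ℕ) : R2) * vv = linForm k m := by
  rw [linForm, Nat.cast_sub hm]; ring

theorem linForm_add (k m i : ℕ) : linForm k (m + i) = linForm k m + i * (uu - vv) := by
  rw [linForm, linForm]; push_cast; ring

theorem linForm_ne_zero {k : ℕ} (hk : 0 < k) (m : ℕ) : linForm k m ≠ 0 := by
  intro h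
  simpa [linForm, uu, vv, hk.ne'] using congrArg (MvPolynomial.eval ![1, 1]) h

theorem eval_Qp_neg_linForm {d m : ℕ} (hm : m ≤ d) : (Qp d).eval (-linForm d m) = 0 := by
  rw [Qp, Polynomial.eval_prod]
  exact prod_eq_zero (mem_range_succ_iff.mpr hm) (by simp [linForm_eq hm])

theorem eval_Qm_eq_zero {r k m : ℕ} (hm : m ≤ k) (i : Fin r) {x : Fin r → R2}
    (hx : x i = -linForm k m) : MvPolynomial.eval x (Qm r k i) = 0 := by
  rw [Qm, map_prod]
  exact prod_eq_zero (mem_range_succ_iff.mpr hm) (by simp [hx, linForm_eq hm])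

def prodErase (d m : ℕ) : R2 := ∏ i ∈ (range (d + 1)).erase m, linForm d i

theorem cdtop_eq_linForm_mul_prodErase {d m : ℕ} (hm : m ≤ d) :
    Cdtop d = linForm d m * prodErase d m := by
  rw [Cdtop, prodErase, mul_prod_erase _ _ (mem_range_succ_iff.mpr hm)]
  exact prod_congr rfl fun i hi => linForm_eq (mem_range_succ_iff.mp hi)

theorem eval_neg_linForm_eq_prodErase {d m : ℕ} (hd : 0 < d) (hm : m ≤ d) {q : Polynomial R2}
    (hq : Polynomial.X * q = Qp d - Polynomial.C (Cdtop d)) :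
    q.eval (-linForm d m) = prodErase d m := by
  have h := congrArg (Polynomial.eval (-linForm d m)) hq
  rw [Polynomial.eval_mul, Polynomial.eval_X, Polynomial.eval_sub, Polynomial.eval_C,
    eval_Qp_neg_linForm hm, cdtop_eq_linForm_mul_prodErase hm] at h
  exact mul_left_cancel₀ (linForm_ne_zero hd m) (by linear_combination -h)

def prodCompl (d m n : ℕ) : R2 := ∏ i ∈ range (d + 1) \ Ico m (m + n + 1), linForm d i

theorem sum_alternating_choose_prodErase_eq_prodCompl {d m n : ℕ} (hmn : m + n ≤ d) :
    ∑ j ∈ range (n + 1), (-1 : R2) ^ j * n.choose j * prodErase d (m + j)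
      = prodCompl d m n * (n ! * (uu - vv) ^ n) := by
  have hsplit : ∀ j ∈ range (n + 1), prodErase d (m + j)
      = prodCompl d m n * ∏ i ∈ (range (n + 1)).erase j, (linForm d m + i * (uu - vv)) := by
    intro j hj
    have hj := mem_range_succ_iff.mp hj
    have hset : (range (d + 1)).erase (m + j) = (range (d + 1) \ Ico m (m + n + 1))
        ∪ ((range (n + 1)).erase j).image (m + ·) := by
      ext i
      simp only [mem_erase, mem_range, mem_union, mem_sdiff, mem_Ico, mem_image]
      constructor
      · intro hi
        by_cases him : m ≤ i ∧ i < m + n + 1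
        · exact Or.inr ⟨i - m, by omega, by omega⟩
        · exact Or.inl ⟨by omega, him⟩
      · rintro (hi | ⟨k, hk, rfl⟩) <;> omega
    rw [prodErase, hset, prod_union, prod_image (by simp)]
    · simp only [linForm_add, prodCompl]
    · rw [disjoint_left]
      intro i hi hi'
      simp only [mem_sdiff, mem_Ico, mem_image, mem_erase, mem_range] at hi hi'
      omega
  rw [sum_congr rfl fun j hj => by rw [hsplit j hj, mul_left_comm], ← mul_sum,
    sum_alternating_choose_mul_prod_erase]

theorem prodCompl_eq {d m n : ℕ} (hmn : m + n ≤ d) :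
    prodCompl d m n
      = (∏ i ∈ range m, linForm d i) * ∏ i ∈ Ico (m + n + 1) (d + 1), linForm d i := by
  rw [prodCompl, ← prod_union]
  · congr 1
    ext i
    simp only [mem_sdiff, mem_range, mem_Ico, mem_union]
    omega
  · rw [disjoint_left]
    intro i hi hi'
    simp only [mem_range, mem_Ico] at hi hi'
    omega

theorem prodCompl_alternating_sum (n : ℕ) :
    prodCompl (2 * n + 4) 0 n - prodCompl (2 * n + 4) 2 n - prodCompl (2 * n + 4) (n + 2) n
        + prodCompl (2 * n + 4) (n + 4) n
      = (n + 2) * (n + 1) * (uu - vv) *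
          ((uu + 3 * vv) * ∏ i ∈ Ico (n + 3) (2 * n + 5), linForm (2 * n + 4) i
            - (vv + 3 * uu) * ∏ i ∈ range (n + 2), linForm (2 * n + 4) i) := by
  rw [prodCompl_eq (by omega), prodCompl_eq (by omega), prodCompl_eq (by omega),
    prodCompl_eq (by omega), show 0 + n + 1 = n + 1 by omega, show 2 + n + 1 = n + 3 by omega,
    show n + 2 + n + 1 = 2 * n + 3 by omega, show n + 4 + n + 1 = 2 * n + 4 + 1 by omega,
    prod_eq_prod_Ico_succ_bot (show n + 1 < 2 * n + 4 + 1 by omega),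
    prod_eq_prod_Ico_succ_bot (show n + 1 + 1 < 2 * n + 4 + 1 by omega),
    prod_eq_prod_Ico_succ_bot (show 2 * n + 3 < 2 * n + 4 + 1 by omega),
    prod_eq_prod_Ico_succ_bot (show 2 * n + 3 + 1 < 2 * n + 4 + 1 by omega)]
  simp only [prod_range_succ, prod_range_zero, Ico_self, prod_empty, linForm]
  push_cast
  ring

theorem prod_range_eq_prod_Ico_linForm {d h : ℕ} (hh : h ≤ d) :
    ∏ l ∈ range h, ((l : R2) * vv + ((d - l : ℕ) : R2) * uu)
      = ∏ i ∈ Ico (d + 1 - h) (d + 1), linForm d i := by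
  rw [prod_Ico_eq_prod_range, show d + 1 - (d + 1 - h) = h by omega,
    ← prod_range_reflect (fun k => linForm d (d + 1 - h + k))]
  refine prod_congr rfl fun l hl => ?_
  have hl := mem_range.mp hl
  rw [linForm, show d + 1 - h + (h - 1 - l) = d - l by omega, Nat.cast_sub (by omega)]
  ring

theorem swapUV_mul_prod {d h : ℕ} (hh : h ≤ d + 1) :
    swapUV ((uu + 3 * vv) * ∏ l ∈ range h, ((l : R2) * vv + ((d - l : ℕ) : R2) * uu))
      = (vv + 3 * uu) * ∏ l ∈ range h, linForm d l := by
  simp only [swapUV, map_mul, map_prod, map_add, map_natCast, map_ofNat, uu, vv,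
    MvPolynomial.rename_X, Equiv.swap_apply_left, Equiv.swap_apply_right]
  congr 1
  exact prod_congr rfl fun l hl => linForm_eq (by have := mem_range.mp hl; omega)

theorem sum_alternating_grid_prodErase (n : ℕ) :
    ∑ j ∈ Fintype.piFinset fun i => range (![n, 1, 1] i + 1),
        (∏ i, (-1 : R2) ^ j i * (![n, 1, 1] i).choose (j i))
          * prodErase (2 * n + 4) (j 0 + 2 * j 1 + (n + 2) * j 2)
      = (prodCompl (2 * n + 4) 0 n - prodCompl (2 * n + 4) 2 n
          - prodCompl (2 * n + 4) (n + 2) n + prodCompl (2 * n + 4) (n + 4) n)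
        * (n ! * (uu - vv) ^ n) := by
  rw [add_mul, sub_mul, sub_mul,
    ← sum_alternating_choose_prodErase_eq_prodCompl (m := 0) (by omega),
    ← sum_alternating_choose_prodErase_eq_prodCompl (m := 2) (by omega),
    ← sum_alternating_choose_prodErase_eq_prodCompl (m := n + 2) (by omega),
    ← sum_alternating_choose_prodErase_eq_prodCompl (m := n + 4) (by omega),
    ← sum_sub_distrib, ← sum_sub_distrib, ← sum_add_distrib, Fintype.sum_piFinset_fin_three]
  refine sum_congr rfl fun j _ => ?_
  simp only [Fin.prod_univ_three, sum_range_succ _ 1, range_one, sum_singleton,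
    Matrix.cons_val_zero, Matrix.cons_val_one, Matrix.cons_val, choose_zero_right, choose_self]
  ring_nf

theorem eval_grid_of_sub_mem_span {n : ℕ} {q : Polynomial R2}
    (hq : Polynomial.X * q = Qp (2 * n + 4) - Polynomial.C (Cdtop (2 * n + 4)))
    {F : MvPolynomial (Fin 3) R2}
    (hrep : Polynomial.aeval
          (MvPolynomial.X 0 + (2 : MvPolynomial (Fin 3) R2) * MvPolynomial.X 1
            + ((n + 2 : ℕ) : MvPolynomial (Fin 3) R2) * MvPolynomial.X 2) q - F
        ∈ Ideal.span {Qm 3 n 0, Qm 3 1 1, Qm 3 1 2})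
    {j : Fin 3 → ℕ} (hj : j ∈ Fintype.piFinset fun i => range (![n, 1, 1] i + 1)) :
    MvPolynomial.eval (fun i => -(![n, 1, 1] i : R2) * vv - j i * (uu - vv)) F
      = prodErase (2 * n + 4) (j 0 + 2 * j 1 + (n + 2) * j 2) := by
  set x : Fin 3 → R2 := fun i => -(![n, 1, 1] i : R2) * vv - j i * (uu - vv)
  have hx : ∀ i, x i = -linForm (![n, 1, 1] i) (j i) := fun i => by simp only [x, linForm]; ring
  have hle : ∀ i, j i ≤ ![n, 1, 1] i :=
    fun i => mem_range_succ_iff.mp (Fintype.mem_piFinset.mp hj i)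
  have hS : ∀ g ∈ ({Qm 3 n 0, Qm 3 1 1, Qm 3 1 2} : Set _), MvPolynomial.eval x g = 0 := by
    rintro g (rfl | rfl | rfl)
    exacts [eval_Qm_eq_zero (hle 0) 0 (hx 0), eval_Qm_eq_zero (hle 1) 1 (hx 1),
      eval_Qm_eq_zero (hle 2) 2 (hx 2)]
  have harg : MvPolynomial.eval x (MvPolynomial.X 0 + 2 * MvPolynomial.X 1
      + ((n + 2 : ℕ) : MvPolynomial (Fin 3) R2) * MvPolynomial.X 2)
      = -linForm (2 * n + 4) (j 0 + 2 * j 1 + (n + 2) * j 2) := by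
    simp only [map_add, map_mul, MvPolynomial.eval_X, map_ofNat, map_natCast, hx, linForm,
      Matrix.cons_val_zero, Matrix.cons_val_one, Matrix.cons_val]
    push_cast
    ring
  have hcomp := Polynomial.aeval_algHom_apply (MvPolynomial.aeval x)
    (MvPolynomial.X 0 + 2 * MvPolynomial.X 1
      + ((n + 2 : ℕ) : MvPolynomial (Fin 3) R2) * MvPolynomial.X 2) q
  rw [MvPolynomial.aeval_eq_eval, harg, Polynomial.coe_aeval_eq_eval] at hcomp
  rw [← (MvPolynomial.eval x).map_eq_of_sub_mem_span hS hrep, ← hcomp,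
    eval_neg_linForm_eq_prodErase (by omega) ?_ hq]
  have h2 : (n + 2) * j 2 ≤ n + 2 := mul_le_of_le_one_right' (hle 2)
  have h0 : j 0 ≤ n := hle 0
  have h1 : j 1 ≤ 1 := hle 1
  omega

/-- Example 3.8, case `j = 2`: the Thom polynomial of `λ = (1^{h−2}, 2, h)`, `d = 2h`,
equals `h(h−1)·∂((u+3v)·Π)`.  Variables: `x = X 0`, `y = X 1`, `z = X 2` in `R[x,y,z]`. -/
theorem stmt8 (h : ℕ) (hh : 2 < h) (d : ℕ) (hd : d = 2 * h)
    (q : Polynomial R2) (hq : Polynomial.X * q = Qp d - Polynomial.C (Cdtop d))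
    (F : MvPolynomial (Fin 3) R2)
    (hx : F.degreeOf 0 ≤ h - 2) (hy : F.degreeOf 1 ≤ 1) (hz : F.degreeOf 2 ≤ 1)
    (hrep : Polynomial.aeval
          (MvPolynomial.X 0 + (2 : MvPolynomial (Fin 3) R2) * MvPolynomial.X 1
            + ((h : ℕ) : MvPolynomial (Fin 3) R2) * MvPolynomial.X 2) q - F
        ∈ Ideal.span {Qm 3 (h - 2) 0, Qm 3 1 1, Qm 3 1 2})
    (D : R2)
    (hD : (uu - vv) * D =
        (uu + 3 * vv) * (∏ l ∈ Finset.range h, ((l : R2) * vv + ((d - l : ℕ) : R2) * uu)) -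
          swapUV ((uu + 3 * vv) *
            ∏ l ∈ Finset.range h, ((l : R2) * vv + ((d - l : ℕ) : R2) * uu))) :
    MvPolynomial.coeff
        (Finsupp.single (0 : Fin 3) (h - 2) + Finsupp.single 1 1 + Finsupp.single 2 1) F
      = (h : R2) * ((h : R2) - 1) * D := by
  obtain ⟨n, rfl⟩ : ∃ n, h = n + 2 := ⟨h - 2, by omega⟩
  rw [show 2 * (n + 2) = 2 * n + 4 by ring] at hd
  subst hd
  simp only [Nat.add_sub_cancel] at hx hrep ⊢
  have hF : ∀ i, F.degreeOf i ≤ ![n, 1, 1] i := by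
    intro i; fin_cases i <;> assumption
  have hΦ := MvPolynomial.sum_piFinset_alternating_choose_mul_eval ![n, 1, 1]
    (fun i => -(![n, 1, 1] i : R2) * vv) (uu - vv) F hF
  rw [sum_congr rfl fun j hj => by rw [eval_grid_of_sub_mem_span hq hrep hj],
    sum_alternating_grid_prodErase, prodCompl_alternating_sum] at hΦ
  rw [swapUV_mul_prod (by omega), prod_range_eq_prod_Ico_linForm (by omega),
    show 2 * n + 4 + 1 - (n + 2) = n + 3 by omega, show 2 * n + 4 + 1 = 2 * n + 5 by omega] at hD
  have hmonomial : Finsupp.single (0 : Fin 3) n + Finsupp.single 1 1 + Finsupp.single 2 1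
      = Finsupp.equivFunOnFinite.symm ![n, 1, 1] := by
    ext i; fin_cases i <;> simp
  rw [← hmonomial, ← hD] at hΦ
  simp only [Fin.prod_univ_three, Matrix.cons_val_zero, Matrix.cons_val_one, Matrix.cons_val,
    factorial_one, cast_one, pow_one, one_mul] at hΦ
  have hne : (n ! : R2) * (uu - vv) ^ (n + 2) ≠ 0 :=
    mul_ne_zero (by exact_mod_cast n.factorial_ne_zero) (pow_ne_zero _ uu_sub_vv_ne_zero)
  refine mul_left_cancel₀ hne ?_
  push_cast
  linear_combination -hΦ
end
end

section
/- Let d = 2h+1 with h ≥ 1, and set Π := ∏_{l=0}^{h} (l·v + (d−l)·u) and L := (h+1)·v + h·u in R. Then every polynomial F ∈ R that divides both ∂Π and ∂(Π·L) is a unit (a nonzero constant); i.e. ∂Π and ∂(Π·L) have no nontrivial common divisor. -/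
noncomputable section

/-!
Write `Π` for the product and `L` for the linear form. Since `L* - L = u - v`, the product rule
for divided differences gives `L*·∂Π - ∂(ΠL) = Π` and `L·∂Π - ∂(ΠL) = Π*`, so a common divisor
of `∂Π` and `∂(ΠL)` divides both `Π` and `Π*`. These are products of linear forms
`l·v + (d−l)·u` and `m·u + (d−m)·v` with `l, m ≤ h`, and no two such forms are proportional
because `l·m ≤ h² < (h+1)² ≤ (d−l)(d−m)`; non-proportional linear forms are relatively prime.
-/

open MvPolynomial

theorem dvd_and_dvd_of_dvd_dividedDifferences {R : Type*} [CommRing R] [IsDomain R]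
    {a P P' L L' x y F : R} (ha : a ≠ 0) (hx : a * x = P - P') (hy : a * y = P * L - P' * L')
    (hL : L' - L = a) (hFx : F ∣ x) (hFy : F ∣ y) : F ∣ P ∧ F ∣ P' := by
  have hP : L' * x - y = P := mul_left_cancel₀ ha <| by
    linear_combination L' * hx - hy + P * hL
  have hP' : L * x - y = P' := mul_left_cancel₀ ha <| by
    linear_combination L * hx - hy + P' * hL
  exact ⟨hP ▸ (hFx.mul_left L').sub hFy, hP' ▸ (hFx.mul_left L).sub hFy⟩

theorem isRelPrime_X_X {σ R : Type*} [CommRing R] [IsDomain R] {i j : σ} (hij : i ≠ j) :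
    IsRelPrime (X i : MvPolynomial σ R) (X j) :=
  X_prime.irreducible.isRelPrime_iff_not_dvd.mpr (X_dvd_X.not.mpr hij)

theorem isRelPrime_linearForms {σ K : Type*} [Field K] {i j : σ} (hij : i ≠ j) {a b c e : K}
    (hdet : a * e - b * c ≠ 0) :
    IsRelPrime (C a * X i + C b * X j : MvPolynomial σ K) (C c * X i + C e * X j) := by
  intro F hFp hFq
  have hunit : IsUnit (C (a * e - b * c) : MvPolynomial σ K) := hdet.isUnit.map C
  have hXi : C (a * e - b * c) * X i =
      C e * (C a * X i + C b * X j) - C b * (C c * X i + C e * X j) := by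
    simp only [map_sub, map_mul]; ring
  have hXj : C (a * e - b * c) * X j =
      C a * (C c * X i + C e * X j) - C c * (C a * X i + C b * X j) := by
    simp only [map_sub, map_mul]; ring
  refine isRelPrime_X_X hij ?_ ?_
  · exact hunit.dvd_mul_left.mp (hXi ▸ (hFp.mul_left _).sub (hFq.mul_left _))
  · exact hunit.dvd_mul_left.mp (hXj ▸ (hFq.mul_left _).sub (hFp.mul_left _))

theorem swapUV_mul (P Q : R2) : swapUV (P * Q) = swapUV P * swapUV Q :=
  map_mul _ P Q

theorem swapUV_prod {ι : Type*} (s : Finset ι) (f : ι → R2) :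
    swapUV (∏ i ∈ s, f i) = ∏ i ∈ s, swapUV (f i) :=
  map_prod _ f s

theorem swapUV_linearForm (a b : ℕ) :
    swapUV ((a : R2) * vv + (b : R2) * uu) = (b : R2) * vv + (a : R2) * uu := by
  simp [swapUV, uu, vv, add_comm]

theorem isRelPrime_prod_linearForms_swapUV (h d : ℕ) (hd : d = 2 * h + 1) :
    IsRelPrime (∏ l ∈ Finset.range (h + 1), ((l : R2) * vv + ((d - l : ℕ) : R2) * uu))
      (swapUV (∏ l ∈ Finset.range (h + 1), ((l : R2) * vv + ((d - l : ℕ) : R2) * uu))) := by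
  simp only [swapUV_prod, swapUV_linearForm]
  refine IsRelPrime.prod_left fun l hl => IsRelPrime.prod_right fun m hm => ?_
  have hlm : l * m < (d - l) * (d - m) := by
    have hl := Finset.mem_range.mp hl
    have hm := Finset.mem_range.mp hm
    calc l * m ≤ h * h := Nat.mul_le_mul (by omega) (by omega)
      _ < (h + 1) * (h + 1) := by nlinarith
      _ ≤ (d - l) * (d - m) := Nat.mul_le_mul (by omega) (by omega)
  have hdet : (l : ℚ) * m - ((d - l : ℕ) : ℚ) * ((d - m : ℕ) : ℚ) ≠ 0 := by
    rw [sub_ne_zero]; exact_mod_cast hlm.ne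
  simpa only [map_natCast, vv, uu] using
    isRelPrime_linearForms (σ := Fin 2) (i := 1) (j := 0) (by decide) hdet

theorem stmt14_general (h : ℕ) (d : ℕ) (hd : d = 2 * h + 1)
    (DPi DPiL : R2)
    (hDPi : (uu - vv) * DPi =
        (∏ l ∈ Finset.range (h + 1), ((l : R2) * vv + ((d - l : ℕ) : R2) * uu)) -
          swapUV (∏ l ∈ Finset.range (h + 1), ((l : R2) * vv + ((d - l : ℕ) : R2) * uu)))
    (hDPiL : (uu - vv) * DPiL =
        (∏ l ∈ Finset.range (h + 1), ((l : R2) * vv + ((d - l : ℕ) : R2) * uu)) *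
            (((h : R2) + 1) * vv + (h : R2) * uu) -
          swapUV ((∏ l ∈ Finset.range (h + 1), ((l : R2) * vv + ((d - l : ℕ) : R2) * uu)) *
            (((h : R2) + 1) * vv + (h : R2) * uu))) :
    ∀ F : R2, F ∣ DPi → F ∣ DPiL → IsUnit F := by
  intro F hF hFL
  have huv : uu - vv ≠ 0 := sub_ne_zero.mpr (X_injective.ne (by decide))
  have hswapL : swapUV (((h : R2) + 1) * vv + (h : R2) * uu) =
      ((h + 1 : ℕ) : R2) * uu + (h : R2) * vv := by
    simpa [add_comm] using swapUV_linearForm (h + 1) h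
  rw [swapUV_mul, hswapL] at hDPiL
  obtain ⟨hFPi, hFPi'⟩ :=
    dvd_and_dvd_of_dvd_dividedDifferences huv hDPi hDPiL (by push_cast; ring) hF hFL
  exact isRelPrime_prod_linearForms_swapUV h d hd hFPi hFPi'

/-- Theorem 4.3, key claim: for `d = 2h+1`, `Π = ∏_{l=0}^{h}(lv+(d−l)u)` and
`L = (h+1)v + hu`, the polynomials `∂Π` and `∂(ΠL)` have no nontrivial common divisor. -/
theorem stmt14 (h : ℕ) (hh : 1 ≤ h) (d : ℕ) (hd : d = 2 * h + 1)
    (DPi DPiL : R2)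
    (hDPi : (uu - vv) * DPi =
        (∏ l ∈ Finset.range (h + 1), ((l : R2) * vv + ((d - l : ℕ) : R2) * uu)) -
          swapUV (∏ l ∈ Finset.range (h + 1), ((l : R2) * vv + ((d - l : ℕ) : R2) * uu)))
    (hDPiL : (uu - vv) * DPiL =
        (∏ l ∈ Finset.range (h + 1), ((l : R2) * vv + ((d - l : ℕ) : R2) * uu)) *
            (((h : R2) + 1) * vv + (h : R2) * uu) -
          swapUV ((∏ l ∈ Finset.range (h + 1), ((l : R2) * vv + ((d - l : ℕ) : R2) * uu)) *
            (((h : R2) + 1) * vv + (h : R2) * uu))) :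
    ∀ F : R2, F ∣ DPi → F ∣ DPiL → IsUnit F :=
  stmt14_general h d hd DPi DPiL hDPi hDPiL
end
end
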